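/- In the polynomial ring ℚ[a,h,x₁,x₂,x₃,x₄] one has the two equal Koszul decompositions of the potential: π̄₄₁·(x₁ − x₄) + π̄₃₂·(x₂ − x₃) = p(a,h,x₁) + p(a,h,x₂) − p(a,h,x₃) − p(a,h,x₄) = ū₁·(x₁ + x₂ − x₃ − x₄) + ū₂·(x₁x₂ − x₃x₄), where ū₁ = ū₁(x₁,x₂,x₃,x₄) and ū₂ = ū₂(x₁,x₂,x₃,x₄). -/

import Mathlib

noncomputable section

open MvPolynomial

/-- The polynomial ring `ℚ[a,h,x₁,x₂,x₃,x₄]`, with `a = X 0`, `h = X 1`, `xᵢ = X (i+1)`. -/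
abbrev S6 : Type := MvPolynomial (Fin 6) ℚ

noncomputable def aP : S6 := X 0
noncomputable def hP : S6 := X 1
noncomputable def x1 : S6 := X 2
noncomputable def x2 : S6 := X 3
noncomputable def x3 : S6 := X 4
noncomputable def x4 : S6 := X 5

/-- The potential `p(a,h,x) = x³ − (3/2)h·x² − 3a·x`. -/
noncomputable def pPot (x : S6) : S6 :=
  x ^ 3 - C (3 / 2 : ℚ) * hP * x ^ 2 - 3 * aP * x

/-- `π̄_{ij} = x_i² + x_i x_j + x_j² − (3/2)h(x_i + x_j) − 3a`. -/
noncomputable def piBar (xi xj : S6) : S6 :=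
  xi ^ 2 + xi * xj + xj ^ 2 - C (3 / 2 : ℚ) * hP * (xi + xj) - 3 * aP

/-- `ū₁(x₁,x₂,x₃,x₄)`. -/
noncomputable def uBar1 (y1 y2 y3 y4 : S6) : S6 :=
  (y1 + y2) ^ 2 + (y1 + y2) * (y3 + y4) + (y3 + y4) ^ 2 - 3 * y1 * y2
    - C (3 / 2 : ℚ) * hP * (y1 + y2 + y3 + y4) - 3 * aP

/-- `ū₂(x₁,x₂,x₃,x₄) = −3(x₃+x₄) + 3h`. -/
noncomputable def uBar2 (y1 y2 y3 y4 : S6) : S6 := -3 * (y3 + y4) + 3 * hP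

theorem C_three_halves_mul_two : (C (3 / 2 : ℚ) : S6) * 2 = 3 := by
  rw [← map_ofNat C 2, ← C_mul, ← map_ofNat C 3]
  norm_num

theorem piBar_mul_sub (y z : S6) : piBar y z * (z - y) = pPot z - pPot y := by
  unfold piBar pPot
  ring

-- The `h`-terms of the two sides differ by `(3 - 2 · (3/2)) · h · (y₁y₂ − y₃y₄)`.
theorem pPot_koszul_uBar (y1 y2 y3 y4 : S6) :
    pPot y1 + pPot y2 - pPot y3 - pPot y4 =
      uBar1 y1 y2 y3 y4 * (y1 + y2 - y3 - y4) + uBar2 y1 y2 y3 y4 * (y1 * y2 - y3 * y4) := by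
  unfold pPot uBar1 uBar2
  linear_combination (hP * (y1 * y2 - y3 * y4)) * C_three_halves_mul_two

/-- the two equal Koszul decompositions of the potential
`p(a,h,x₁) + p(a,h,x₂) − p(a,h,x₃) − p(a,h,x₄)`. -/
theorem stmt_5 :
    piBar x4 x1 * (x1 - x4) + piBar x3 x2 * (x2 - x3) =
        pPot x1 + pPot x2 - pPot x3 - pPot x4 ∧
      pPot x1 + pPot x2 - pPot x3 - pPot x4 =
        uBar1 x1 x2 x3 x4 * (x1 + x2 - x3 - x4) + uBar2 x1 x2 x3 x4 * (x1 * x2 - x3 * x4) := by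
  refine ⟨?_, pPot_koszul_uBar x1 x2 x3 x4⟩
  rw [piBar_mul_sub, piBar_mul_sub]
  ring

end
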